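/- arXiv:1512.08786 — 5 statements merged into one kernel-verified Lean document; each statement's English description precedes it below -/
import Mathlib

section
/- Let K be a number field of degree n and let β be a nonzero algebraic integer of K. If Log(β) ∈ Q_k for some index k ≤ r₁ (so that φ_k is a real embedding), then K = ℚ(β); moreover, if φ_k(β) > 0, then φ_k(β) is a Pisot number. -/
open Polynomial NumberField

noncomputable section

/-- A Pisot number: a real algebraic integer `θ > 1` all of whose other conjugates over `ℚ`
have modulus strictly smaller than `1`. -/
def IsPisotNumber (θ : ℝ) : Prop :=
  1 < θ ∧ IsIntegral ℤ θ ∧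
    ∀ z : ℂ, aeval z (minpoly ℚ θ) = 0 → z ≠ (θ : ℂ) → ‖z‖ < 1

/-- A Salem number: a real algebraic integer `θ > 1` all of whose other conjugates over `ℚ`
have modulus at most `1`, with at least one conjugate of modulus exactly `1`. -/
def IsSalemNumber (θ : ℝ) : Prop :=
  1 < θ ∧ IsIntegral ℤ θ ∧
    (∀ z : ℂ, aeval z (minpoly ℚ θ) = 0 → z ≠ (θ : ℂ) → ‖z‖ ≤ 1) ∧
    (∃ z : ℂ, aeval z (minpoly ℚ θ) = 0 ∧ ‖z‖ = 1)

/-- A complex Pisot number: a non-real algebraic integer `θ` with `|θ| > 1` all of whose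
conjugates over `ℚ` other than `θ` and `conj θ` have modulus strictly smaller than `1`. -/
def IsComplexPisotNumber (θ : ℂ) : Prop :=
  θ.im ≠ 0 ∧ 1 < ‖θ‖ ∧ IsIntegral ℤ θ ∧
    ∀ z : ℂ, aeval z (minpoly ℚ θ) = 0 → z ≠ θ → z ≠ (starRingEnd ℂ) θ → ‖z‖ < 1

variable {K : Type*} [Field K]

/-- The `Log` map `x ↦ (log|σ₁ x|, …, log|σ_{r₁} x|, 2 log|τ₁ x|, …, 2 log|τ_{r₂} x|)`,
indexed by `Fin r₁ ⊕ Fin r₂` (real embeddings first, then representatives of the complex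
conjugate pairs). -/
def LogMap {r₁ r₂ : ℕ} (σ : Fin r₁ → (K →+* ℂ)) (τ : Fin r₂ → (K →+* ℂ)) (x : K) :
    Fin r₁ ⊕ Fin r₂ → ℝ :=
  Sum.elim (fun i => Real.log ‖σ i x‖)
    (fun i => 2 * Real.log ‖τ i x‖)

/-- `σ` is the family of the real embeddings of `K` and `τ` a system of representatives of the
conjugate pairs of non-real embeddings: each `σ i` is real-valued, each `τ i` is not, and
`σ, τ, conj ∘ τ` together enumerate all embeddings `K →+* ℂ` without repetition. -/
def IsEmbeddingSystem {r₁ r₂ : ℕ} (σ : Fin r₁ → (K →+* ℂ)) (τ : Fin r₂ → (K →+* ℂ)) : Prop :=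
  (∀ i, ∀ x : K, ((σ i) x).im = 0) ∧
  (∀ i, ∃ x : K, ((τ i) x).im ≠ 0) ∧
  Function.Bijective
    (Sum.elim σ (Sum.elim τ (fun i => (starRingEnd ℂ).comp (τ i))) :
      Fin r₁ ⊕ (Fin r₂ ⊕ Fin r₂) → (K →+* ℂ))

/-- The open region `Q_k = {v : v_k > 0 and v_j < 0 for all j ≠ k}`. -/
def PosQuadrant {ι : Type*} (k : ι) : Set (ι → ℝ) :=
  {v | 0 < v k ∧ ∀ j, j ≠ k → v j < 0}

/-- The half line `l_{k,j} = {v : v_k > 0, v_j = -v_k, v_i = 0 for i ≠ k, j}`. -/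
def SalemLine {ι : Type*} (k j : ι) : Set (ι → ℝ) :=
  {v | 0 < v k ∧ v j = -v k ∧ ∀ i, i ≠ k → i ≠ j → v i = 0}

/-
If `Log β ∈ Q_k` with `φ_k` real, then `|φ_k(β)| > 1` while every other embedding maps `β`
into the open unit disc. Hence no other embedding agrees with `φ_k` on `β`, so `β` is a
primitive element of `K`; and since the conjugates of `φ_k(β)` over `ℚ` are exactly the values
`φ(β)` of the embeddings `φ`, all of them except `φ_k(β)` itself lie in the unit disc.
-/

open scoped IntermediateField

theorem minpoly_eq_of_ofReal_eq_apply [CharZero K] {θ : ℝ} {β : K} {φ : K →+* ℂ}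
    (hθ : (θ : ℂ) = φ β) : minpoly ℚ θ = minpoly ℚ β := by
  rw [← minpoly.algHom_eq (Complex.ofRealAm.restrictScalars ℚ) Complex.ofReal_injective,
    ← minpoly.algHom_eq φ.toRatAlgHom φ.injective β]
  exact congrArg (minpoly ℚ) hθ

section NumberField

variable [NumberField K]

theorem adjoin_simple_eq_top_of_norm_lt {β : K} (φ₀ : K →+* ℂ)
    (hsmall : ∀ φ : K →+* ℂ, φ ≠ φ₀ → ‖φ β‖ < ‖φ₀ β‖) : ℚ⟮β⟯ = ⊤ := by
  refine (Field.primitive_element_iff_algHom_eq_of_eval ℚ ℂ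
    (fun x ↦ IsAlgClosed.splits _) β φ₀.toRatAlgHom).mpr fun ψ hψ ↦ ?_
  by_contra hne
  have hψ_ne : (ψ : K →+* ℂ) ≠ φ₀ := fun h ↦ hne (AlgHom.coe_ringHom_injective h.symm)
  exact (hsmall ψ hψ_ne).ne (congrArg norm hψ.symm)

theorem exists_ringHom_apply_eq_of_aeval_minpoly_eq_zero {β : K} {z : ℂ}
    (hz : aeval z (minpoly ℚ β) = 0) : ∃ φ : K →+* ℂ, φ β = z := by
  have hroot : z ∈ (minpoly ℚ β).rootSet ℂ :=
    mem_rootSet.mpr ⟨minpoly.ne_zero (Algebra.IsIntegral.isIntegral β), hz⟩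
  rwa [← NumberField.Embeddings.range_eval_eq_rootSet_minpoly K ℂ β] at hroot

theorem isPisotNumber_of_norm_lt_one {β : K} (hint : IsIntegral ℤ β) {φ₀ : K →+* ℂ} {θ : ℝ}
    (hθ : (θ : ℂ) = φ₀ β) (h1 : 1 < θ) (hsmall : ∀ φ : K →+* ℂ, φ ≠ φ₀ → ‖φ β‖ < 1) :
    IsPisotNumber θ := by
  have hint_θ : IsIntegral ℤ θ := by
    have h : IsIntegral ℤ (θ : ℂ) := hθ ▸ hint.map φ₀.toIntAlgHom
    exact (isIntegral_algebraMap_iff Complex.ofReal_injective).mp h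
  refine ⟨h1, hint_θ, fun z hz hzne ↦ ?_⟩
  rw [minpoly_eq_of_ofReal_eq_apply hθ] at hz
  obtain ⟨φ, rfl⟩ := exists_ringHom_apply_eq_of_aeval_minpoly_eq_zero hz
  exact hsmall φ fun h ↦ hzne (by rw [h, hθ])

end NumberField

section LogMap

variable {r₁ r₂ : ℕ} {σ : Fin r₁ → (K →+* ℂ)} {τ : Fin r₂ → (K →+* ℂ)} {β : K} {i : Fin r₁}

theorem one_lt_norm_of_logMap_mem_posQuadrant
    (hQ : LogMap σ τ β ∈ PosQuadrant (Sum.inl i : Fin r₁ ⊕ Fin r₂)) : 1 < ‖σ i β‖ :=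
  (Real.log_pos_iff (norm_nonneg _)).mp hQ.1

theorem norm_lt_one_of_logMap_mem_posQuadrant (hsys : IsEmbeddingSystem σ τ)
    (hQ : LogMap σ τ β ∈ PosQuadrant (Sum.inl i : Fin r₁ ⊕ Fin r₂)) :
    ∀ φ : K →+* ℂ, φ ≠ σ i → ‖φ β‖ < 1 := by
  have lt_one_of_log_neg {x : ℝ} (h : Real.log x < 0) : x < 1 :=
    lt_of_not_ge fun hx ↦ (Real.log_nonneg hx).not_gt h
  have log_τ_neg (j : Fin r₂) : Real.log ‖τ j β‖ < 0 := by
    have h := hQ.2 (Sum.inr j) Sum.inr_ne_inl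
    simp only [LogMap, Sum.elim_inr] at h
    linarith
  intro φ hφ
  obtain ⟨e, rfl⟩ := hsys.2.2.2 φ
  rcases e with j | j | j <;>
    simp only [Sum.elim_inl, Sum.elim_inr, RingHom.comp_apply, Complex.norm_conj] at hφ ⊢
  · exact lt_one_of_log_neg (hQ.2 (Sum.inl j) fun h ↦ hφ (by simp_all))
  · exact lt_one_of_log_neg (log_τ_neg j)
  · exact lt_one_of_log_neg (log_τ_neg j)

end LogMap

theorem pisot_of_logMap_mem_posQuadrant_real_general
    {K : Type*} [Field K] [NumberField K] {r₁ r₂ : ℕ}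
    (σ : Fin r₁ → (K →+* ℂ)) (τ : Fin r₂ → (K →+* ℂ))
    (hsys : IsEmbeddingSystem σ τ)
    (β : K) (hint : IsIntegral ℤ β)
    (i : Fin r₁)
    (hQ : LogMap σ τ β ∈ PosQuadrant (Sum.inl i : Fin r₁ ⊕ Fin r₂)) :
    IntermediateField.adjoin ℚ {β} = ⊤ ∧
      (0 < ((σ i) β).re → IsPisotNumber ((σ i) β).re) := by
  have hbig := one_lt_norm_of_logMap_mem_posQuadrant hQ
  have hsmall := norm_lt_one_of_logMap_mem_posQuadrant hsys hQ
  refine ⟨adjoin_simple_eq_top_of_norm_lt (σ i) fun φ hφ ↦ (hsmall φ hφ).trans hbig,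
    fun hpos ↦ ?_⟩
  have hre : ((σ i β).re : ℂ) = σ i β := Complex.ext rfl (by simp [hsys.1 i β])
  refine isPisotNumber_of_norm_lt_one hint hre ?_ hsmall
  rwa [← hre, Complex.norm_real, Real.norm_of_nonneg hpos.le] at hbig

/-- Proposition, part 1. If `β` is a nonzero algebraic integer of a number
field `K` of degree `n = r₁ + 2r₂` and `Log β ∈ Q_k` for an index `k` corresponding to a real
embedding `φ_k = σ i`, then `K = ℚ(β)`; moreover if `φ_k(β) > 0` then `φ_k(β)` is a Pisot
number. -/
theorem pisot_of_logMap_mem_posQuadrant_real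
    {K : Type*} [Field K] [NumberField K] {r₁ r₂ : ℕ}
    (σ : Fin r₁ → (K →+* ℂ)) (τ : Fin r₂ → (K →+* ℂ))
    (hsys : IsEmbeddingSystem σ τ)
    (hdeg : Module.finrank ℚ K = r₁ + 2 * r₂)
    (β : K) (hβ : β ≠ 0) (hint : IsIntegral ℤ β)
    (i : Fin r₁)
    (hQ : LogMap σ τ β ∈ PosQuadrant (Sum.inl i : Fin r₁ ⊕ Fin r₂)) :
    IntermediateField.adjoin ℚ {β} = ⊤ ∧
      (0 < ((σ i) β).re → IsPisotNumber ((σ i) β).re) :=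
  pisot_of_logMap_mem_posQuadrant_real_general σ τ hsys β hint i hQ
end
end

section
/- Let K ⊆ ℂ be a number field and let k be a proper subfield of K. Let r_K and r_k denote the ranks of the unit groups O_K^* and O_k^* respectively. Then r_K = r_k if and only if K is a CM field and k = K ∩ ℝ. -/
set_option synthInstance.maxHeartbeats 400000

open NumberField

noncomputable section

/-- The totally real part `F = K ∩ ℝ` of a number field `K ⊆ ℂ`, as a subfield of `K`
(the subfield of elements of `K` that are real numbers). -/
def maximalRealSubfield (K : IntermediateField ℚ ℂ) : IntermediateField ℚ ↥K :=
  Subfield.toIntermediateField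
    (Subfield.comap (algebraMap ↥K ℂ) Complex.ofRealHom.fieldRange)
    (fun q => ⟨(q : ℝ), by simp [IntermediateField.algebraMap_apply]⟩)

/-- `K ⊆ ℂ` is a CM field: `K` is totally imaginary, `F = K ∩ ℝ` is totally real, and
`[K : F] = 2`. -/
def IsCMField (K : IntermediateField ℚ ℂ) : Prop :=
  (∀ φ : ↥K →+* ℂ, ∃ x : ↥K, (φ x).im ≠ 0) ∧
  (∀ φ : ↥(_root_.maximalRealSubfield K) →+* ℂ, ∀ x, (φ x).im = 0) ∧
  Module.finrank ↥(_root_.maximalRealSubfield K) ↥K = 2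

/-!
Write `n(L) = [L : ℚ]` and `p(L)` for the number of infinite places of `L`, so that
`rank O_L^* = p(L) - 1`. Since `n = r₁ + 2 r₂` and `p = r₁ + r₂`, we have `n/2 ≤ p ≤ n`, with
equality on the left iff `L` is totally complex and on the right iff `L` is totally real.
For a proper subfield `k ⊂ K` this gives `p(k) ≤ n(k) ≤ n(K)/2 ≤ p(K)`, so the ranks agree iff
`K` is totally complex, `k` is totally real and `[K : k] = 2`. A totally real `k` lies in
`K ∩ ℝ`, which is a proper subfield of the totally complex `K`; as `[K : k] = 2`, `k = K ∩ ℝ`.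
-/

open Module

namespace IntermediateField

variable {F L : Type*} [Field F] [Field L] [Algebra F L] [FiniteDimensional F L]

theorem one_lt_finrank_of_ne_top {E : IntermediateField F L} (hE : E ≠ ⊤) :
    1 < finrank E L := by
  have : 0 < finrank E L := finrank_pos
  have : finrank E L ≠ 1 := mt finrank_eq_one_iff_eq_top.mp hE
  omega

theorem eq_of_le_of_ne_top_of_finrank_eq_two {E₁ E₂ : IntermediateField F L} (hle : E₁ ≤ E₂)
    (hE₂ : E₂ ≠ ⊤) (h₁ : finrank E₁ L = 2) : E₁ = E₂ := by
  have := finrank_le_of_le_left hle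
  have := one_lt_finrank_of_ne_top hE₂
  exact eq_of_le_of_finrank_eq' hle (by omega)

end IntermediateField

namespace NumberField

theorem ComplexEmbedding.isReal_iff_forall_im_eq_zero {L : Type*} [Field L] (φ : L →+* ℂ) :
    ComplexEmbedding.IsReal φ ↔ ∀ x, (φ x).im = 0 := by
  simp only [ComplexEmbedding.isReal_iff, RingHom.ext_iff, ComplexEmbedding.conjugate_coe_eq,
    Complex.conj_eq_iff_im]

theorem isTotallyReal_iff_forall_im_eq_zero {L : Type*} [Field L] :
    IsTotallyReal L ↔ ∀ φ : L →+* ℂ, ∀ x, (φ x).im = 0 := by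
  simp only [← ComplexEmbedding.isReal_iff_forall_im_eq_zero]
  exact ⟨fun _ ↦ IsTotallyReal.complexEmbedding_isReal,
    fun h ↦ ⟨fun w ↦ InfinitePlace.isReal_iff.mpr (h w.embedding)⟩⟩

theorem isTotallyComplex_iff_forall_exists_im_ne_zero {L : Type*} [Field L] :
    IsTotallyComplex L ↔ ∀ φ : L →+* ℂ, ∃ x, (φ x).im ≠ 0 := by
  simp only [← not_forall, ← ComplexEmbedding.isReal_iff_forall_im_eq_zero]
  exact ⟨fun _ ↦ IsTotallyComplex.complexEmbedding_not_isReal,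
    fun h ↦ ⟨fun w ↦ InfinitePlace.not_isReal_iff_isComplex.mp
      (InfinitePlace.isReal_iff.not.mpr (h w.embedding))⟩⟩

namespace InfinitePlace

variable (L : Type*) [Field L] [NumberField L]

theorem card_le_finrank : Fintype.card (InfinitePlace L) ≤ finrank ℚ L := by
  have := card_add_two_mul_card_eq_rank L
  rw [card_eq_nrRealPlaces_add_nrComplexPlaces]
  omega

theorem card_eq_finrank_iff : Fintype.card (InfinitePlace L) = finrank ℚ L ↔ IsTotallyReal L := by
  have := card_add_two_mul_card_eq_rank L
  rw [card_eq_nrRealPlaces_add_nrComplexPlaces, ← nrComplexPlaces_eq_zero_iff]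
  omega

theorem finrank_le_two_mul_card : finrank ℚ L ≤ 2 * Fintype.card (InfinitePlace L) := by
  have := card_add_two_mul_card_eq_rank L
  rw [card_eq_nrRealPlaces_add_nrComplexPlaces]
  omega

theorem two_mul_card_eq_finrank_iff :
    2 * Fintype.card (InfinitePlace L) = finrank ℚ L ↔ IsTotallyComplex L := by
  have := card_add_two_mul_card_eq_rank L
  rw [card_eq_nrRealPlaces_add_nrComplexPlaces, ← nrRealPlaces_eq_zero_iff]
  omega

end InfinitePlace

open InfinitePlace in
theorem card_infinitePlace_eq_iff_of_one_lt_finrank {k K : Type*} [Field k] [Field K]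
    [NumberField k] [NumberField K] [Algebra k K] (hkK : 1 < finrank k K) :
    Fintype.card (InfinitePlace K) = Fintype.card (InfinitePlace k) ↔
      IsTotallyComplex K ∧ IsTotallyReal k ∧ finrank k K = 2 := by
  have htower : finrank ℚ k * finrank k K = finrank ℚ K := finrank_mul_finrank ℚ k K
  have hk_pos : 0 < finrank ℚ k := finrank_pos
  have hdeg : 2 * finrank ℚ k ≤ finrank ℚ K := htower ▸ by rw [mul_comm]; gcongr; omega
  have hdeg_eq : 2 * finrank ℚ k = finrank ℚ K ↔ finrank k K = 2 := by
    rw [← htower, mul_comm, Nat.mul_left_cancel_iff hk_pos, eq_comm]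
  rw [← two_mul_card_eq_finrank_iff, ← card_eq_finrank_iff, ← hdeg_eq]
  have := card_le_finrank k
  have := finrank_le_two_mul_card K
  omega

theorem Units.rank_eq_rank_iff_of_one_lt_finrank {k K : Type*} [Field k] [Field K]
    [NumberField k] [NumberField K] [Algebra k K] (hkK : 1 < finrank k K) :
    Units.rank K = Units.rank k ↔ IsTotallyComplex K ∧ IsTotallyReal k ∧ finrank k K = 2 := by
  rw [← card_infinitePlace_eq_iff_of_one_lt_finrank hkK, Units.rank, Units.rank]
  have : 0 < Fintype.card (InfinitePlace K) := Fintype.card_pos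
  have : 0 < Fintype.card (InfinitePlace k) := Fintype.card_pos
  omega

end NumberField

section maximalRealSubfield

variable {K : IntermediateField ℚ ℂ}

theorem mem_maximalRealSubfield_iff_im_eq_zero (x : K) :
    x ∈ _root_.maximalRealSubfield K ↔ (x : ℂ).im = 0 := by
  constructor
  · rintro ⟨r, hr⟩
    simpa using congrArg Complex.im hr.symm
  · exact fun h ↦ ⟨(x : ℂ).re, Complex.ext rfl h.symm⟩

theorem le_maximalRealSubfield_of_isTotallyReal (k : IntermediateField ℚ K) [IsTotallyReal k] :
    k ≤ _root_.maximalRealSubfield K := fun x hx ↦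
  (mem_maximalRealSubfield_iff_im_eq_zero x).mpr <| isTotallyReal_iff_forall_im_eq_zero.mp ‹_›
    ((algebraMap K ℂ).comp (algebraMap k K)) ⟨x, hx⟩

theorem maximalRealSubfield_ne_top_of_isTotallyComplex [IsTotallyComplex K] :
    _root_.maximalRealSubfield K ≠ ⊤ := fun h ↦ by
  obtain ⟨x, hx⟩ := isTotallyComplex_iff_forall_exists_im_ne_zero.mp ‹_› (algebraMap K ℂ)
  exact hx <| (mem_maximalRealSubfield_iff_im_eq_zero x).mp (h ▸ IntermediateField.mem_top)

end maximalRealSubfield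

/-- Remak. Let `K ⊆ ℂ` be a number field and `k` a proper subfield (in
characteristic zero any subfield contains `ℚ`). The unit groups of `O_K` and `O_k` have the
same (Dirichlet) rank if and only if `K` is a CM field and `k = K ∩ ℝ`. -/
theorem unit_rank_eq_iff_cm_and_eq_realSubfield
    (K : IntermediateField ℚ ℂ) [NumberField ↥K]
    (k : IntermediateField ℚ ↥K) [NumberField ↥k] (hk : k ≠ ⊤) :
    NumberField.Units.rank ↥K = NumberField.Units.rank ↥k ↔
      _root_.IsCMField K ∧ k = _root_.maximalRealSubfield K := by
  rw [Units.rank_eq_rank_iff_of_one_lt_finrank (k := k) (K := K)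
      (IntermediateField.one_lt_finrank_of_ne_top hk),
    _root_.IsCMField, ← isTotallyComplex_iff_forall_exists_im_ne_zero,
    ← isTotallyReal_iff_forall_im_eq_zero]
  constructor
  · rintro ⟨hK, hkR, h2⟩
    have hkF : k = _root_.maximalRealSubfield K :=
      IntermediateField.eq_of_le_of_ne_top_of_finrank_eq_two
        (le_maximalRealSubfield_of_isTotallyReal k) maximalRealSubfield_ne_top_of_isTotallyComplex h2
    exact ⟨⟨hK, hkF ▸ hkR, hkF ▸ h2⟩, hkF⟩
  · rintro ⟨⟨hK, hF, h2⟩, rfl⟩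
    exact ⟨hK, hF, h2⟩

end
end

section
/- Let r ≥ 1 and let A be a real (r+1)×r matrix with rows A¹,…,A^{r+1} ∈ ℝ^r such that Σ_{j=1}^{r+1} A^j = 0. Let i ∈ {1,…,r+1} and assume the r×r matrix whose rows are the A^j for j ≠ i is invertible. Then there exists a nonzero vector e ∈ ℤ^r such that A^j·e < 0 for all j ≠ i and A^i·e ≤ (√r / 2)·Σ_{j=1}^{r+1} ‖A^j‖, where ‖·‖ denotes the Euclidean norm on ℝ^r and · the standard dot product. -/
/-!
Solve the linear system `A^j · x = -(√r/2)‖A^j‖ - ε` for `j ≠ i` (possible since these rows are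
independent) and round `x` coordinatewise. The rounding error has Euclidean length at most `√r/2`,
so by Cauchy–Schwarz every `A^j · e` moves by at most `(√r/2)‖A^j‖`: the rows `j ≠ i` stay negative,
and since `A^i = -∑_{j ≠ i} A^j`, the row `i` is at most `(√r/2)∑_j ‖A^j‖ + r ε`. The solutions
depend affinely on `ε ∈ (0, 1]`, so only finitely many integer points arise; the one minimising
`A^i · e` satisfies the bound for every `ε`, hence also in the limit.
-/

open Finset Matrix Filter Topology

theorem Matrix.mulVec_surjective_of_linearIndependent_row {m n K : Type*} [Fintype m]
    [Fintype n] [Field K] {M : Matrix m n K} (hM : LinearIndependent K M.row) :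
    Function.Surjective M.mulVec := by
  have hrange : LinearMap.range M.mulVecLin = ⊤ := by
    apply Submodule.eq_top_of_finrank_eq
    rw [Module.finrank_fintype_fun_eq_card, ← finrank_span_eq_card hM,
      ← rank_eq_finrank_span_row]
    rfl
  exact LinearMap.range_eq_top.mp hrange

section Rounding

variable {ι : Type*} [Fintype ι]

theorem sum_sq_round_sub_le (x : ι → ℝ) :
    ∑ t, ((round (x t) : ℝ) - x t) ^ 2 ≤ Fintype.card ι / 4 := by
  have h (t : ι) : ((round (x t) : ℝ) - x t) ^ 2 ≤ 1 / 4 := by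
    rw [← sq_abs, abs_sub_comm]
    nlinarith [abs_sub_round (x t), abs_nonneg (x t - round (x t))]
  calc _ ≤ ∑ _t : ι, (1 / 4 : ℝ) := sum_le_sum fun t _ => h t
    _ = Fintype.card ι / 4 := by rw [sum_const, card_univ, nsmul_eq_mul]; ring

theorem dotProduct_round_le (a x : ι → ℝ) :
    a ⬝ᵥ (fun t => (round (x t) : ℝ)) ≤
      a ⬝ᵥ x + √(Fintype.card ι) / 2 * √(∑ t, a t ^ 2) := by
  have hsplit : a ⬝ᵥ (fun t => (round (x t) : ℝ)) =
      a ⬝ᵥ x + ∑ t, a t * ((round (x t) : ℝ) - x t) := by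
    simp only [dotProduct, ← sum_add_distrib, mul_sub, add_sub_cancel]
  have hsqrt : √(∑ t, ((round (x t) : ℝ) - x t) ^ 2) ≤ √(Fintype.card ι) / 2 := by
    calc _ ≤ √(Fintype.card ι / 4) := Real.sqrt_le_sqrt (sum_sq_round_sub_le x)
      _ = √(Fintype.card ι) / 2 := by
        rw [Real.sqrt_div' _ (by norm_num), show (4 : ℝ) = 2 ^ 2 by norm_num,
          Real.sqrt_sq (by norm_num)]
  rw [hsplit, mul_comm (√_ / 2)]
  gcongr
  exact (Real.sum_mul_le_sqrt_mul_sqrt _ _ _).trans (by gcongr)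

theorem Bornology.IsBounded.finite_image_round {s : Set (ι → ℝ)}
    (hs : Bornology.IsBounded s) : ((fun x t => round (x t)) '' s).Finite := by
  classical
  obtain ⟨C, hC⟩ := isBounded_iff_forall_norm_le.mp hs
  refine (Set.finite_Icc (-fun _ => ⌈C⌉ + 1) fun _ => ⌈C⌉ + 1).subset ?_
  rintro _ ⟨x, hx, rfl⟩
  have hround (t : ι) : |(round (x t) : ℝ)| ≤ ⌈C⌉ + 1 := by
    have hxt : |x t| ≤ C := by simpa using (norm_le_pi_norm x t).trans (hC x hx)
    calc |(round (x t) : ℝ)| ≤ |x t| + |x t - round (x t)| := by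
          simpa using abs_sub (x t) (x t - round (x t))
      _ ≤ C + 1 / 2 := add_le_add hxt (abs_sub_round _)
      _ ≤ ⌈C⌉ + 1 := by linarith [Int.le_ceil C]
  exact ⟨fun t => by exact_mod_cast (abs_le.mp (hround t)).1,
    fun t => by exact_mod_cast (abs_le.mp (hround t)).2⟩

end Rounding

theorem le_of_forall_mem_Ioc_le_add_mul {a b c : ℝ}
    (h : ∀ ε ∈ Set.Ioc (0 : ℝ) 1, a ≤ b + ε * c) : a ≤ b := by
  have hlim : Tendsto (fun ε : ℝ => b + ε * c) (𝓝[>] 0) (𝓝 b) :=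
    tendsto_nhdsWithin_of_tendsto_nhds (by simpa using (continuous_const.add
      (continuous_id.mul continuous_const)).tendsto (0 : ℝ) (f := fun ε : ℝ => b + ε * c))
  exact ge_of_tendsto hlim (eventually_of_mem (Ioc_mem_nhdsGT one_pos) h)

theorem dotProduct_eq_neg_sum_erase {ι κ : Type*} [Fintype ι] [Fintype κ] [DecidableEq κ]
    {A : κ → ι → ℝ} (hsum : ∑ j, A j = 0) (i : κ) (x : ι → ℝ) :
    A i ⬝ᵥ x = -∑ j ∈ univ.erase i, A j ⬝ᵥ x := by
  rw [eq_neg_iff_add_eq_zero, add_sum_erase _ (fun j => A j ⬝ᵥ x) (mem_univ i),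
    ← sum_dotProduct, hsum, zero_dotProduct]

theorem exists_int_dotProduct_neg_and_le_of_sum_eq_zero {ι κ : Type*} [Fintype ι] [Fintype κ]
    [DecidableEq κ] {A : κ → ι → ℝ} (hsum : ∑ j, A j = 0) {i : κ}
    (hind : LinearIndependent ℝ fun j : {j // j ≠ i} => A j) :
    ∃ e : ι → ℤ, (∀ j ≠ i, A j ⬝ᵥ (fun t => (e t : ℝ)) < 0) ∧
      A i ⬝ᵥ (fun t => (e t : ℝ)) ≤ √(Fintype.card ι) / 2 * ∑ j, √(∑ t, A j t ^ 2) := by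
  set δ := √(Fintype.card ι) / 2
  set M : Matrix {j // j ≠ i} ι ℝ := Matrix.of fun j => A j
  obtain ⟨x₀, hx₀⟩ := M.mulVec_surjective_of_linearIndependent_row hind
    fun j => -(δ * √(∑ t, A j t ^ 2))
  obtain ⟨x₁, hx₁⟩ := M.mulVec_surjective_of_linearIndependent_row hind fun _ => -1
  set x : ℝ → ι → ℝ := fun ε => x₀ + ε • x₁
  have hx_ne (ε : ℝ) (j : κ) (hj : j ≠ i) :
      A j ⬝ᵥ x ε = -(δ * √(∑ t, A j t ^ 2)) - ε := by
    have h₀ := congrFun hx₀ ⟨j, hj⟩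
    have h₁ := congrFun hx₁ ⟨j, hj⟩
    simp only [M, mulVec, of_apply] at h₀ h₁
    simp only [x, dotProduct_add, dotProduct_smul, h₀, h₁, smul_eq_mul]
    ring
  have hx_self (ε : ℝ) :
      A i ⬝ᵥ x ε = δ * ∑ j ∈ univ.erase i, √(∑ t, A j t ^ 2) + ε * #(univ.erase i) := by
    rw [dotProduct_eq_neg_sum_erase hsum,
      sum_congr rfl fun j hj => hx_ne ε j (ne_of_mem_erase hj), sum_sub_distrib,
      sum_neg_distrib, ← mul_sum, sum_const, nsmul_eq_mul]
    ring
  have hfin : ((fun ε t => round (x ε t)) '' Set.Ioc 0 1).Finite := by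
    rw [← Set.image_image (fun y t => round (y t)) x]
    exact ((isCompact_Icc.image (by fun_prop)).isBounded.subset
      (Set.image_mono Set.Ioc_subset_Icc_self)).finite_image_round
  obtain ⟨_, ⟨ε₀, hε₀, rfl⟩, hmin⟩ := Set.exists_min_image _
    (fun e : ι → ℤ => A i ⬝ᵥ fun t => (e t : ℝ)) hfin
    ⟨_, ⟨1, Set.right_mem_Ioc.mpr one_pos, rfl⟩⟩
  refine ⟨fun t => round (x ε₀ t), fun j hj => ?_,
    le_of_forall_mem_Ioc_le_add_mul (c := #(univ.erase i)) fun ε hε => ?_⟩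
  · calc _ ≤ A j ⬝ᵥ x ε₀ + δ * √(∑ t, A j t ^ 2) := dotProduct_round_le _ _
      _ < 0 := by rw [hx_ne ε₀ j hj]; linarith [hε₀.1]
  · calc _ ≤ A i ⬝ᵥ (fun t => (round (x ε t) : ℝ)) := hmin _ ⟨ε, hε, rfl⟩
      _ ≤ A i ⬝ᵥ x ε + δ * √(∑ t, A i t ^ 2) := dotProduct_round_le _ _
      _ = δ * ∑ j, √(∑ t, A j t ^ 2) + ε * #(univ.erase i) := by
        rw [hx_self, ← add_sum_erase _ _ (mem_univ i)]
        ring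

/-- Height bound, lattice-point form. Let `A` be a real `(r+1) × r` matrix
with rows `A¹, …, A^{r+1}` summing to `0`, and let `i` be an index such that the `r × r`
matrix formed by the rows `A^j`, `j ≠ i`, is invertible (i.e. those rows are linearly
independent). Then there is a nonzero integer vector `e ∈ ℤ^r` with `A^j · e < 0` for all
`j ≠ i` and `A^i · e ≤ (√r / 2) ∑_j ‖A^j‖`, where `‖·‖` is the Euclidean norm. -/
theorem exists_integer_point_in_quadrant
    (r : ℕ) (hr : 1 ≤ r) (A : Fin (r + 1) → Fin r → ℝ)
    (hsum : ∑ j, A j = 0) (i : Fin (r + 1))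
    (hind : LinearIndependent ℝ (fun j : {j : Fin (r + 1) // j ≠ i} => A j)) :
    ∃ e : Fin r → ℤ, e ≠ 0 ∧
      (∀ j, j ≠ i → ∑ t, A j t * (e t : ℝ) < 0) ∧
      ∑ t, A i t * (e t : ℝ) ≤
        (Real.sqrt r / 2) * ∑ j, Real.sqrt (∑ t, (A j t) ^ 2) := by
  obtain ⟨e, hneg, hle⟩ := exists_int_dotProduct_neg_and_le_of_sum_eq_zero hsum hind
  refine ⟨e, ?_, hneg, by simpa [dotProduct] using hle⟩
  rintro rfl
  simpa using hneg (i.succAbove ⟨0, hr⟩) (Fin.succAbove_ne i _)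
end

section
/- Let K ⊆ ℝ be a real number field with [K : ℚ] ≥ 2. Then there exists a Pisot number β such that β is a unit of O_K (i.e. β and β⁻¹ are both algebraic integers) and K = ℚ(β). -/
open Polynomial

noncomputable section

/-! Dirichlet's unit theorem gives a unit `u` of `𝓞 K` with `|σ u| < 1` for every complex
embedding `σ` other than the inclusion `K ⊆ ℝ`; replacing `u` by `u²` makes it positive in `ℝ`.
The conjugates of `u` are its images under the complex embeddings, so all of them except `u`
itself lie in the open unit disc. Hence no other embedding agrees with the inclusion at `u`, so
`u` generates `K`; in particular `u ≠ 1` as `K ≠ ℚ`. Finally `u ≥ 1` because its norm is a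
nonzero integer. -/

open IntermediateField in
theorem IntermediateField.adjoin_simple_coe_eq_of_eq_top {F E : Type*} [Field F] [Field E]
    [Algebra F E] {K : IntermediateField F E} {x : K} (h : F⟮x⟯ = ⊤) : F⟮(x : E)⟯ = K := by
  rw [← lift_adjoin_simple, h, lift_top]

namespace NumberField

open InfinitePlace ComplexEmbedding

variable {K : Type*} [Field K]

theorem ComplexEmbedding.isReal_ofRealHom_comp (ρ : K →+* ℝ) :
    IsReal (Complex.ofRealHom.comp ρ) := by
  rw [isReal_iff]
  ext x
  simp [conjugate]

namespace InfinitePlace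

def ofRealEmbedding (ρ : K →+* ℝ) : InfinitePlace K := mk (Complex.ofRealHom.comp ρ)

variable (ρ : K →+* ℝ)

theorem isReal_ofRealEmbedding : IsReal (ofRealEmbedding ρ) :=
  isReal_mk_iff.mpr (isReal_ofRealHom_comp ρ)

theorem ofRealEmbedding_apply (x : K) : ofRealEmbedding ρ x = |ρ x| := by
  simp [ofRealEmbedding, apply]

theorem eq_of_mk_eq_ofRealEmbedding {ρ : K →+* ℝ} {φ : K →+* ℂ}
    (h : mk φ = ofRealEmbedding ρ) : φ = Complex.ofRealHom.comp ρ := by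
  rcases mk_eq_iff.mp h with h | h
  · exact h
  · rw [← star_star φ]
    exact h ▸ isReal_ofRealHom_comp ρ

end InfinitePlace

theorem isIntegral_inv_map_unit {L : Type*} [Field L] (ρ : K →+* L) (u : (𝓞 K)ˣ) :
    IsIntegral ℤ (ρ u)⁻¹ := by
  rw [← map_inv₀, ← zpow_neg_one, ← Units.coe_zpow]
  exact (RingOfIntegers.isIntegral_coe _).map ρ.toIntAlgHom

variable [NumberField K] (ρ : K →+* ℝ)

theorem exists_unit_pos_forall_ne_lt_one :
    ∃ u : (𝓞 K)ˣ, 0 < ρ u ∧ ∀ ⦃w⦄, w ≠ ofRealEmbedding ρ → w u < 1 := by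
  obtain ⟨u, hu⟩ := Units.dirichletUnitTheorem.exists_unit K (ofRealEmbedding ρ)
  refine ⟨u ^ 2, ?_, fun w hw ↦ ?_⟩
  · rw [Units.coe_pow, map_pow]
    exact pow_two_pos_of_ne_zero (map_ne_zero ρ |>.mpr (Units.coe_ne_zero u))
  · rw [Units.coe_pow, map_pow]
    exact pow_lt_one₀ (apply_nonneg _ _)
      ((Real.log_neg_iff (Units.pos_at_place u w)).mp (hu w hw)) two_ne_zero

theorem one_lt_of_forall_ne_lt_one {x : 𝓞 K} (hpos : 0 < ρ x) (hne : ρ x ≠ 1)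
    (hlt : ∀ ⦃w⦄, w ≠ ofRealEmbedding ρ → w x < 1) : 1 < ρ x := by
  have hx : x ≠ 0 := by
    rintro rfl
    simp at hpos
  refine lt_of_le_of_ne ?_ hne.symm
  simpa [ofRealEmbedding_apply, abs_of_pos hpos] using one_le_of_lt_one hx hlt

theorem norm_lt_one_of_aeval_minpoly_eq_zero {x : K}
    (hlt : ∀ ⦃w⦄, w ≠ ofRealEmbedding ρ → w x < 1) {z : ℂ} (hz : aeval z (minpoly ℚ x) = 0)
    (hne : z ≠ ρ x) : ‖z‖ < 1 := by
  have hroot : z ∈ (minpoly ℚ x).rootSet ℂ :=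
    mem_rootSet.mpr ⟨minpoly.ne_zero (Algebra.IsIntegral.isIntegral x), hz⟩
  obtain ⟨φ, rfl⟩ := (Embeddings.range_eval_eq_rootSet_minpoly K ℂ x).symm.subset hroot
  have hφ : InfinitePlace.mk φ ≠ ofRealEmbedding ρ := fun h ↦
    hne (by rw [eq_of_mk_eq_ofRealEmbedding h]; rfl)
  simpa [apply] using hlt hφ

theorem isPisotNumber_of_forall_ne_lt_one {x : 𝓞 K} (h1 : 1 < ρ x)
    (hlt : ∀ ⦃w⦄, w ≠ ofRealEmbedding ρ → w x < 1) : IsPisotNumber (ρ x) := by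
  refine ⟨h1, (RingOfIntegers.isIntegral_coe x).map ρ.toIntAlgHom, fun z hz hne ↦ ?_⟩
  rw [show minpoly ℚ (ρ x) = minpoly ℚ (x : K) from
    minpoly.algHom_eq ρ.toRatAlgHom ρ.injective x] at hz
  exact norm_lt_one_of_aeval_minpoly_eq_zero ρ hlt hz hne

end NumberField

open NumberField

/-- Every real number field `K ⊆ ℝ` of degree at least `2` over `ℚ` is
generated by a Pisot number `β` which is a unit of `O_K`, i.e. both `β` and `β⁻¹` are
algebraic integers. -/
theorem exists_pisot_unit_generator (K : IntermediateField ℚ ℝ)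
    [FiniteDimensional ℚ ↥K] (h2 : 2 ≤ Module.finrank ℚ ↥K) :
    ∃ β : ℝ, IsPisotNumber β ∧ IsIntegral ℤ β ∧ IsIntegral ℤ β⁻¹ ∧
      IntermediateField.adjoin ℚ {β} = K := by
  have : NumberField K := ⟨⟩
  set ρ : K →+* ℝ := algebraMap K ℝ
  obtain ⟨u, hpos, hlt⟩ := exists_unit_pos_forall_ne_lt_one ρ
  have hgen : IntermediateField.adjoin ℚ {ρ u} = K :=
    IntermediateField.adjoin_simple_coe_eq_of_eq_top <|
      is_primitive_element_of_infinitePlace_lt u.ne_zero hlt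
        (Or.inl (InfinitePlace.isReal_ofRealEmbedding ρ))
  have hne : ρ u ≠ 1 := by
    intro h
    rw [h, IntermediateField.adjoin_one] at hgen
    subst hgen
    simp at h2
  refine ⟨ρ u,
    isPisotNumber_of_forall_ne_lt_one ρ (one_lt_of_forall_ne_lt_one ρ hpos hne hlt) hlt,
    (RingOfIntegers.isIntegral_coe _).map ρ.toIntAlgHom, isIntegral_inv_map_unit ρ u, hgen⟩
end
end

section
/- Let K be a number field with r = r₁ + r₂ − 1 ≥ 1. Then for every index k ∈ {1,…,r+1} there exists a unit u ∈ O_K^* with Log(u) ∈ Q_k. -/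
/-!
The indices `j` correspond bijectively to the infinite places `w_j` of `K`, and
`Log(x)_j = mult(w_j) · log w_j(x)`. For a unit these coordinates sum to `0`, since
`∏ w(u) ^ mult(w) = |N(u)| = 1`. Dirichlet's unit theorem provides a unit `u` with `w(u) < 1` at
every place other than `w_k`, so every coordinate but the `k`-th is negative; as there is at least
one other coordinate, the `k`-th one is positive.
-/

open Polynomial NumberField

noncomputable section

variable {K : Type*} [Field K]

open InfinitePlace ComplexEmbedding

theorem mem_posQuadrant_of_sum_eq_zero {ι : Type*} [Fintype ι] [Nontrivial ι] {v : ι → ℝ}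
    {k : ι} (hsum : ∑ j, v j = 0) (hneg : ∀ j, j ≠ k → v j < 0) : v ∈ PosQuadrant k := by
  classical
  refine ⟨?_, hneg⟩
  obtain ⟨j, hj⟩ := exists_ne k
  have hrest : ∑ i ∈ {k}ᶜ, v i < 0 :=
    Finset.sum_neg (fun i hi => hneg i (by simpa using hi)) ⟨j, by simpa using hj⟩
  rw [Fintype.sum_eq_add_sum_compl k] at hsum
  linarith

namespace IsEmbeddingSystem

variable {r₁ r₂ : ℕ} {σ : Fin r₁ → (K →+* ℂ)} {τ : Fin r₂ → (K →+* ℂ)}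

theorem isReal_left (h : IsEmbeddingSystem σ τ) (i : Fin r₁) : ComplexEmbedding.IsReal (σ i) :=
  isReal_iff.mpr <| RingHom.ext fun x => Complex.conj_eq_iff_im.mpr (h.1 i x)

theorem not_isReal_right (h : IsEmbeddingSystem σ τ) (i : Fin r₂) :
    ¬ ComplexEmbedding.IsReal (τ i) := by
  obtain ⟨x, hx⟩ := h.2.1 i
  intro hreal
  exact hx (Complex.conj_eq_iff_im.mp (RingHom.congr_fun (isReal_iff.mp hreal) x))

theorem bijective_mk (h : IsEmbeddingSystem σ τ) :
    Function.Bijective fun j => InfinitePlace.mk (Sum.elim σ τ j) := by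
  have hσ : ∀ i, conjugate (σ i) = σ i := fun i => isReal_iff.mp (h.isReal_left i)
  obtain ⟨-, -, hE⟩ := h
  generalize hdef : Sum.elim σ (Sum.elim τ fun i => (starRingEnd ℂ).comp (τ i)) = E at hE
  have hσE : ∀ i, σ i = E (.inl i) := fun i => by rw [← hdef]; rfl
  have hτE : ∀ i, τ i = E (.inr (.inl i)) := fun i => by rw [← hdef]; rfl
  have hconjσ : ∀ i, conjugate (E (.inl i)) = E (.inl i) := fun i => by rw [← hσE, hσ]
  have hconjτ : ∀ i, conjugate (E (.inr (.inl i))) = E (.inr (.inr i)) :=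
    fun i => by rw [← hdef]; rfl
  constructor
  · rintro (a | a) (b | b) hab <;>
      simp_all [mk_eq_iff, hE.injective.eq_iff]
  · intro w
    obtain ⟨i | i | i, hi⟩ := hE.surjective w.embedding
    · exact ⟨.inl i, by simp [hσE, hi, mk_embedding]⟩
    · exact ⟨.inr i, by simp [hτE, hi, mk_embedding]⟩
    · refine ⟨.inr i, ?_⟩
      rw [← mk_embedding w, ← hi, ← hconjτ, mk_conjugate_eq, ← hτE]
      rfl

def placeEquiv (h : IsEmbeddingSystem σ τ) : Fin r₁ ⊕ Fin r₂ ≃ InfinitePlace K :=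
  Equiv.ofBijective _ h.bijective_mk

theorem logMap_apply (h : IsEmbeddingSystem σ τ) (x : K) (j : Fin r₁ ⊕ Fin r₂) :
    LogMap σ τ x j = mult (h.placeEquiv j) * Real.log (h.placeEquiv j x) := by
  rcases j with i | i
  · simp [LogMap, placeEquiv, mult, isReal_mk_iff.mpr (h.isReal_left i), apply]
  · simp [LogMap, placeEquiv, mult, isReal_mk_iff, h.not_isReal_right i, apply]

theorem sum_logMap_units [NumberField K] (h : IsEmbeddingSystem σ τ) (u : (𝓞 K)ˣ) :
    ∑ j, LogMap σ τ ((u : 𝓞 K) : K) j = 0 := by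
  simp_rw [h.logMap_apply]
  exact (h.placeEquiv.sum_comp fun w => mult w * Real.log (w ((u : 𝓞 K) : K))).trans
    (Units.sum_mult_mul_log u)

theorem logMap_neg_iff (h : IsEmbeddingSystem σ τ) (x : K) (j : Fin r₁ ⊕ Fin r₂) :
    LogMap σ τ x j < 0 ↔ Real.log (h.placeEquiv j x) < 0 := by
  rw [h.logMap_apply, ← smul_eq_mul, smul_neg_iff_of_pos_left (by exact_mod_cast mult_pos)]

end IsEmbeddingSystem

theorem exists_unit_logMap_mem_posQuadrant_general
    {K : Type*} [Field K] [NumberField K] {r₁ r₂ : ℕ}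
    (σ : Fin r₁ → (K →+* ℂ)) (τ : Fin r₂ → (K →+* ℂ))
    (hsys : IsEmbeddingSystem σ τ)
    (hr : 2 ≤ r₁ + r₂) :
    ∀ k : Fin r₁ ⊕ Fin r₂, ∃ u : (𝓞 K)ˣ,
      LogMap σ τ ((u : 𝓞 K) : K) ∈ PosQuadrant k := by
  have : Nontrivial (Fin r₁ ⊕ Fin r₂) := Fintype.one_lt_card_iff_nontrivial.mp <| by
    simp only [Fintype.card_sum, Fintype.card_fin]; omega
  intro k
  obtain ⟨u, hu⟩ := Units.dirichletUnitTheorem.exists_unit K (hsys.placeEquiv k)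
  refine ⟨u, mem_posQuadrant_of_sum_eq_zero (hsys.sum_logMap_units u) fun j hj => ?_⟩
  exact (hsys.logMap_neg_iff _ j).mpr (hu _ (hsys.placeEquiv.injective.ne hj))

/-- If `K` is a number field with unit rank `r = r₁ + r₂ - 1 ≥ 1`, then for
every index `k` there is a unit `u ∈ O_K^*` with `Log u ∈ Q_k`. -/
theorem exists_unit_logMap_mem_posQuadrant
    {K : Type*} [Field K] [NumberField K] {r₁ r₂ : ℕ}
    (σ : Fin r₁ → (K →+* ℂ)) (τ : Fin r₂ → (K →+* ℂ))
    (hsys : IsEmbeddingSystem σ τ)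
    (hdeg : Module.finrank ℚ K = r₁ + 2 * r₂)
    (hr : 2 ≤ r₁ + r₂) :
    ∀ k : Fin r₁ ⊕ Fin r₂, ∃ u : (𝓞 K)ˣ,
      LogMap σ τ ((u : 𝓞 K) : K) ∈ PosQuadrant k :=
  exists_unit_logMap_mem_posQuadrant_general σ τ hsys hr
end
end
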